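/- arXiv:2401.11532 — 4 statements merged into one kernel-verified Lean document; each statement's English description precedes it below -/
import Mathlib

section
/- Let P be a monic polynomial of degree d with complex coefficients, and let ξ be a real-valued random variable. Then for every ε > 0, the probability that |P(ξ)| < ε^d is at most d times the Lévy concentration function L(ξ, ε), where L(ξ, ε) = sup_{t ∈ ℝ} P(|ξ − t| < ε). -/
open MeasureTheory
open scoped ENNReal

lemma pow_card_le_prod_aux (ε : ℝ) (hε : 0 < ε) (s : Multiset ℂ) (f : ℂ → ℝ)
    (h : ∀ r ∈ s, ε ≤ f r) : ε ^ Multiset.card s ≤ (s.map f).prod := by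
  induction s using Multiset.induction with
  | empty => simp
  | cons a s ih =>
    rw [Multiset.card_cons, Multiset.map_cons, Multiset.prod_cons, pow_succ']
    exact mul_le_mul (h a (Multiset.mem_cons_self a s))
      (ih fun r hr => h r (Multiset.mem_cons_of_mem hr))
      (pow_nonneg hε.le _) (hε.le.trans (h a (Multiset.mem_cons_self a s)))

/-- Lemma: small values of a monic polynomial at a random input, bounded by the
Lévy concentration function. -/
theorem stmt0 {Ω : Type*} [MeasurableSpace Ω] (μ : Measure Ω) [IsProbabilityMeasure μ]
    (ξ : Ω → ℝ) (hξ : Measurable ξ) (P : Polynomial ℂ) (hP : P.Monic) (d : ℕ)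
    (hd : P.natDegree = d) (ε : ℝ) (hε : 0 < ε) :
    μ {ω | ‖P.eval (ξ ω : ℂ)‖ < ε ^ d}
      ≤ (d : ℝ≥0∞) * ⨆ t : ℝ, μ {ω | |ξ ω - t| < ε} := by
  have hsplits : P.Splits := IsAlgClosed.splits P
  have hcard : P.roots.card = d := by
    rw [← hd]
    exact (Polynomial.splits_iff_card_roots.mp hsplits)
  have hProd : ∀ z : ℂ, P.eval z = (P.roots.map fun r => z - r).prod := by
    intro z
    conv_lhs => rw [hsplits.eq_prod_roots_of_monic hP]
    rw [Polynomial.eval_multiset_prod, Multiset.map_map]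
    simp
  have hsub : {ω | ‖P.eval (ξ ω : ℂ)‖ < ε ^ d} ⊆
      ⋃ r ∈ P.roots.toFinset, {ω | |ξ ω - r.re| < ε} := by
    intro ω hω
    simp only [Set.mem_setOf_eq] at hω
    rw [hProd] at hω
    have hex : ∃ r ∈ P.roots, ‖(ξ ω : ℂ) - r‖ < ε := by
      by_contra h
      push_neg at h
      have hbig : (ε : ℝ) ^ d ≤ ‖(P.roots.map fun r => (ξ ω : ℂ) - r).prod‖ := by
        rw [show ‖(P.roots.map fun r => (ξ ω : ℂ) - r).prod‖ = _ from map_multiset_prod (normHom : ℂ →*₀ ℝ) _, Multiset.map_map]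
        rw [← hcard]
        exact pow_card_le_prod_aux ε hε P.roots _ fun r hr => h r hr
      exact absurd hω (not_lt.mpr hbig)
    obtain ⟨r, hr, hlt⟩ := hex
    refine Set.mem_biUnion (Multiset.mem_toFinset.mpr hr) ?_
    simp only [Set.mem_setOf_eq]
    calc |ξ ω - r.re| = |((ξ ω : ℂ) - r).re| := by simp
      _ ≤ ‖(ξ ω : ℂ) - r‖ := Complex.abs_re_le_norm _
      _ < ε := hlt
  calc μ {ω | ‖P.eval (ξ ω : ℂ)‖ < ε ^ d}
      ≤ μ (⋃ r ∈ P.roots.toFinset, {ω | |ξ ω - r.re| < ε}) := measure_mono hsub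
    _ ≤ ∑ r ∈ P.roots.toFinset, μ {ω | |ξ ω - r.re| < ε} := measure_biUnion_finset_le _ _
    _ ≤ P.roots.toFinset.card • ⨆ t : ℝ, μ {ω | |ξ ω - t| < ε} := by
        apply Finset.sum_le_card_nsmul
        intro r _
        exact le_iSup (fun t => μ {ω | |ξ ω - t| < ε}) r.re
    _ ≤ (d : ℝ≥0∞) * ⨆ t : ℝ, μ {ω | |ξ ω - t| < ε} := by
        rw [nsmul_eq_mul]
        apply mul_le_mul_left
        exact_mod_cast (Multiset.toFinset_card_le _).trans hcard.le
end

section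
/- Let a_0, ..., a_{2n−2} be independent real random variables and let A be the n×n Toeplitz matrix with entries A_{ij} = a_{n−1+i−j} (so the main diagonal is constantly a_{n−1}). Then for every ε > 0, ℙ(|det A|^{1/n} < ε) ≤ n · L(a_{n−1}, ε), where L denotes the Lévy concentration function. -/
open MeasureTheory ProbabilityTheory
open scoped ENNReal
section aux
open Polynomial

lemma eval_charpoly' {n : ℕ} (M : Matrix (Fin n) (Fin n) ℝ) (x : ℝ) :
    (M.charpoly).eval x = Matrix.det (x • (1 : Matrix (Fin n) (Fin n) ℝ) - M) := by
  rw [Matrix.charpoly, _root_.eval_det, Matrix.matPolyEquiv_charmatrix]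
  congr 1
  simp [Matrix.scalar_apply, Matrix.smul_one_eq_diagonal]

lemma prod_abs_lb (x ε : ℝ) (hε : 0 ≤ ε) (s : Multiset ℂ)
    (h : ∀ z ∈ s, ε ≤ ‖(x : ℂ) - z‖) :
    ε ^ Multiset.card s ≤ ‖(s.map (fun z => (x : ℂ) - z)).prod‖ := by
  induction s using Multiset.induction with
  | empty => simp
  | cons z s ih =>
    simp only [Multiset.map_cons, Multiset.prod_cons, Multiset.card_cons, norm_mul, pow_succ]
    rw [mul_comm ‖(x : ℂ) - z‖]
    exact mul_le_mul (ih fun w hw => h w (Multiset.mem_cons_of_mem hw))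
      (h z (Multiset.mem_cons_self z s)) hε (norm_nonneg _)

lemma poly_cover {p : Polynomial ℝ} (hp : p.Monic) {n : ℕ} (hdeg : p.natDegree = n)
    {ε x : ℝ} (hε : 0 < ε) (hx : |p.eval x| < ε ^ n) :
    ∃ z ∈ (p.map (algebraMap ℝ ℂ)).roots, |x - z.re| < ε := by
  by_contra hcon
  push_neg at hcon
  set q := p.map (algebraMap ℝ ℂ) with hq
  have hqm : q.Monic := hp.map _
  have hqsplits : q.Splits := IsAlgClosed.splits q
  have hcard : Multiset.card q.roots = n := by
    rw [Polynomial.splits_iff_card_roots.mp hqsplits, hq, p.natDegree_map_eq_of_injective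
      (algebraMap ℝ ℂ).injective, hdeg]
  have hprod : q = (q.roots.map fun z => Polynomial.X - Polynomial.C z).prod :=
    hqsplits.eq_prod_roots_of_monic hqm
  have heval : q.eval (x : ℂ) = ((q.roots.map fun z => (x : ℂ) - z)).prod := by
    conv_lhs => rw [hprod]
    rw [Polynomial.eval_multiset_prod, Multiset.map_map]
    simp
  have heval2 : q.eval (x : ℂ) = ((p.eval x : ℝ) : ℂ) := by
    rw [hq, Polynomial.eval_map]
    rw [show ((x : ℂ)) = algebraMap ℝ ℂ x from rfl, Polynomial.eval₂_at_apply]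
    rfl
  have hge : ε ^ n ≤ |p.eval x| := by
    have := prod_abs_lb x ε hε.le q.roots fun z hz => by
      have h1 := hcon z hz
      have h2 := Complex.abs_re_le_norm ((x : ℂ) - z)
      simp only [Complex.sub_re, Complex.ofReal_re] at h2
      exact h1.trans h2
    rw [hcard, ← heval, heval2, Complex.norm_real, Real.norm_eq_abs] at this
    exact this
  linarith

open MeasureTheory in
lemma meas_bound (ν : MeasureTheory.Measure ℝ) {n : ℕ} (hn : 1 ≤ n)
    (B : Matrix (Fin n) (Fin n) ℝ) {ε : ℝ} (hε : 0 < ε) :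
    ν {x | |Matrix.det (x • (1 : Matrix (Fin n) (Fin n) ℝ) + B)| < ε ^ n}
      ≤ (n : ENNReal) * ⨆ t : ℝ, ν {x | |x - t| < ε} := by
  set p := (-B).charpoly with hp
  have hpm : p.Monic := (-B).charpoly_monic
  have hpd : p.natDegree = n := by
    rw [hp, Matrix.charpoly_natDegree_eq_dim, Fintype.card_fin]
  have hdet : ∀ x : ℝ, Matrix.det (x • (1 : Matrix (Fin n) (Fin n) ℝ) + B) = p.eval x := by
    intro x
    rw [hp, eval_charpoly', sub_neg_eq_add]
  set q := p.map (algebraMap ℝ ℂ) with hq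
  have hcard : Multiset.card q.roots = n := by
    rw [Polynomial.splits_iff_card_roots.mp (IsAlgClosed.splits q), hq,
      p.natDegree_map_eq_of_injective (algebraMap ℝ ℂ).injective, hpd]
  set l := q.roots.toList with hl
  have hlen : l.length = n := by rw [hl, Multiset.length_toList, hcard]
  set t : Fin n → ℝ := fun i => (l.get (Fin.cast hlen.symm i)).re with ht
  have hsub : {x : ℝ | |Matrix.det (x • (1 : Matrix (Fin n) (Fin n) ℝ) + B)| < ε ^ n}
      ⊆ ⋃ i : Fin n, {x : ℝ | |x - t i| < ε} := by
    intro x hx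
    rw [Set.mem_setOf_eq, hdet] at hx
    obtain ⟨z, hz, hzx⟩ := poly_cover hpm hpd hε hx
    rw [← Multiset.mem_toList, ← hl] at hz
    obtain ⟨j, hj⟩ := List.mem_iff_get.mp hz
    refine Set.mem_iUnion.mpr ⟨Fin.cast hlen j, ?_⟩
    simp only [Set.mem_setOf_eq, ht]
    have : l.get (Fin.cast hlen.symm (Fin.cast hlen j)) = z := by
      rw [← hj]
      congr 1
    rw [this]
    exact hzx
  calc ν _ ≤ ν (⋃ i : Fin n, {x : ℝ | |x - t i| < ε}) := measure_mono hsub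
    _ ≤ ∑' i : Fin n, ν {x : ℝ | |x - t i| < ε} := measure_iUnion_le _
    _ ≤ ∑' _ : Fin n, ⨆ t : ℝ, ν {x | |x - t| < ε} :=
        ENNReal.tsum_le_tsum fun i => le_iSup (fun t : ℝ => ν {x | |x - t| < ε}) (t i)
    _ = (n : ENNReal) * ⨆ t : ℝ, ν {x | |x - t| < ε} := by
        rw [tsum_fintype]
        simp [Finset.sum_const, Finset.card_univ, nsmul_eq_mul]

end aux

/-- Quantitative invertibility of a random Toeplitz matrix with independent entries. -/
theorem stmt1 {Ω : Type*} [MeasurableSpace Ω] (μ : Measure Ω) [IsProbabilityMeasure μ]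
    (n : ℕ) (hn : 1 ≤ n) (a : ℕ → Ω → ℝ) (hmeas : ∀ k, Measurable (a k))
    (hindep : iIndepFun a μ)
    (ε : ℝ) (hε : 0 < ε) :
    μ {ω | |Matrix.det (Matrix.of fun i j : Fin n => a (n - 1 + (i : ℕ) - (j : ℕ)) ω)|
          ^ ((1 : ℝ) / n) < ε}
      ≤ (n : ℝ≥0∞) * ⨆ t : ℝ, μ {ω | |a (n - 1) ω - t| < ε} := by
  classical
  set T : Finset ℕ := (Finset.range (2*n-1)).erase (n-1) with hT
  have hmem : ∀ (i j : Fin n), (i:ℕ) ≠ (j:ℕ) → (n - 1 + (i:ℕ) - (j:ℕ)) ∈ T := by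
    intro i j hij
    have hi := i.isLt; have hj := j.isLt
    simp only [hT, Finset.mem_erase, Finset.mem_range]
    omega
  set B : (T → ℝ) → Matrix (Fin n) (Fin n) ℝ := fun y => Matrix.of fun i j =>
    if h : (i:ℕ) = (j:ℕ) then 0 else y ⟨n - 1 + (i:ℕ) - (j:ℕ), hmem i j h⟩ with hB
  set X : Ω → ℝ := a (n-1) with hX
  set Y : Ω → (T → ℝ) := fun ω i => a i ω with hY
  have hkey : ∀ ω, (Matrix.of fun i j : Fin n => a (n - 1 + (i : ℕ) - (j : ℕ)) ω)
      = X ω • (1 : Matrix (Fin n) (Fin n) ℝ) + B (Y ω) := by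
    intro ω
    ext i j
    simp only [Matrix.of_apply, Matrix.add_apply, Matrix.smul_apply, smul_eq_mul, hB]
    by_cases h : (i:ℕ) = (j:ℕ)
    · have hij : i = j := Fin.ext h
      subst hij
      rw [dif_pos h, Matrix.one_apply_eq, show n - 1 + (i:ℕ) - (i:ℕ) = n - 1 from by omega]
      simp [hX]
    · have hij : i ≠ j := fun hc => h (by rw [hc])
      rw [Matrix.one_apply_ne hij]
      simp only [dif_neg h, mul_zero, zero_add]
      rfl
  -- measurability
  have hXm : Measurable X := hmeas _
  have hYm : Measurable Y := measurable_pi_lambda _ fun i => hmeas _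
  have hentry : ∀ i j : Fin n,
      Measurable fun p : (T → ℝ) × ℝ => (p.2 • (1 : Matrix (Fin n) (Fin n) ℝ) + B p.1) i j := by
    intro i j
    have : (fun p : (T → ℝ) × ℝ => (p.2 • (1 : Matrix (Fin n) (Fin n) ℝ) + B p.1) i j)
        = fun p => p.2 * (1 : Matrix (Fin n) (Fin n) ℝ) i j
          + (if h : (i:ℕ) = (j:ℕ) then 0 else p.1 ⟨n - 1 + (i:ℕ) - (j:ℕ), hmem i j h⟩) := rfl
    rw [this]
    refine (measurable_snd.mul_const _).add ?_
    by_cases h : (i:ℕ) = (j:ℕ)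
    · simp only [dif_pos h]; exact measurable_const
    · simp only [dif_neg h]; exact (measurable_pi_apply _).comp measurable_fst
  have hgm : Measurable fun p : (T → ℝ) × ℝ =>
      Matrix.det (p.2 • (1 : Matrix (Fin n) (Fin n) ℝ) + B p.1) := by
    simp only [Matrix.det_apply']
    exact Finset.measurable_sum _ fun σ _ =>
      (Finset.measurable_prod _ fun i _ => hentry _ _).const_mul _
  -- independence
  have hdisj : Disjoint T ({n-1} : Finset ℕ) := by
    simp [hT, Finset.disjoint_singleton_right]
  have hind0 := hindep.indepFun_finset T {n-1} hdisj hmeas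
  have hindYX : IndepFun Y X μ := by
    have h2 := hind0.comp (measurable_id (α := ↥T → ℝ))
      (measurable_pi_apply (⟨n-1, by simp⟩ : (({n-1} : Finset ℕ) : Type)))
    exact h2
  set E : Set ((T → ℝ) × ℝ) :=
    {p | |Matrix.det (p.2 • (1 : Matrix (Fin n) (Fin n) ℝ) + B p.1)| < ε ^ n} with hE
  have hEm : MeasurableSet E := measurableSet_lt hgm.abs measurable_const
  have hn0 : (n : ℕ) ≠ 0 := by omega
  have hiff : ∀ d : ℝ, |d| ^ ((1:ℝ)/n) < ε ↔ |d| < ε ^ n := by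
    intro d
    have h1 : (|d| ^ ((1:ℝ)/n)) ^ n = |d| := by
      rw [← Real.rpow_natCast (|d| ^ ((1:ℝ)/n)) n, ← Real.rpow_mul (abs_nonneg d),
        one_div, inv_mul_cancel₀ (by exact_mod_cast hn0), Real.rpow_one]
    constructor
    · intro h
      calc |d| = (|d| ^ ((1:ℝ)/n)) ^ n := h1.symm
        _ < ε ^ n := by
            exact pow_lt_pow_left₀ h (Real.rpow_nonneg (abs_nonneg d) _) hn0
    · intro h
      have := (pow_lt_pow_iff_left₀ (Real.rpow_nonneg (abs_nonneg d) _) hε.le hn0).mp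
        (by rw [h1]; exact h)
      exact this
  have hsetEq : {ω | |Matrix.det (Matrix.of fun i j : Fin n =>
        a (n - 1 + (i : ℕ) - (j : ℕ)) ω)| ^ ((1 : ℝ) / n) < ε}
      = (fun ω => (Y ω, X ω)) ⁻¹' E := by
    ext ω
    simp only [Set.mem_setOf_eq, Set.mem_preimage, hE, hkey ω]
    exact hiff _
  have hρ : IsProbabilityMeasure (μ.map Y) := Measure.isProbabilityMeasure_map hYm.aemeasurable
  have hmapprod := (indepFun_iff_map_prod_eq_prod_map_map hYm.aemeasurable hXm.aemeasurable).mp hindYX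
  have hCset : ∀ t : ℝ, MeasurableSet {x : ℝ | |x - t| < ε} := fun t =>
    measurableSet_lt ((continuous_abs.comp (continuous_id.sub continuous_const)).measurable)
      measurable_const
  have hC : ∀ t : ℝ, (μ.map X) {x | |x - t| < ε} = μ {ω | |a (n-1) ω - t| < ε} := by
    intro t
    rw [Measure.map_apply hXm (hCset t)]
    rfl
  calc μ {ω | |Matrix.det (Matrix.of fun i j : Fin n =>
        a (n - 1 + (i : ℕ) - (j : ℕ)) ω)| ^ ((1 : ℝ) / n) < ε}
      = μ ((fun ω => (Y ω, X ω)) ⁻¹' E) := by rw [hsetEq]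
    _ = (μ.map (fun ω => (Y ω, X ω))) E := (Measure.map_apply (hYm.prodMk hXm) hEm).symm
    _ = ((μ.map Y).prod (μ.map X)) E := by rw [hmapprod]
    _ = ∫⁻ y, (μ.map X) (Prod.mk y ⁻¹' E) ∂(μ.map Y) := Measure.prod_apply hEm
    _ ≤ ∫⁻ _, ((n : ℝ≥0∞) * ⨆ t : ℝ, (μ.map X) {x | |x - t| < ε}) ∂(μ.map Y) :=
        lintegral_mono fun y => meas_bound (μ.map X) hn (B y) hε
    _ = (n : ℝ≥0∞) * ⨆ t : ℝ, μ {ω | |a (n-1) ω - t| < ε} := by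
        rw [lintegral_const, measure_univ, mul_one]
        congr 1
        exact iSup_congr hC
end

section
/- Let (a_j)_{j=0}^∞ be independent random variables with E|a_j| ≤ γ < ∞ and L(a_j, ε) ≤ K ε for all ε > 0, j ≥ 0, and some K ≥ 1. For fixed n ≥ 1, let A_m^{(n)} be the n×n Toeplitz matrix with (i,j) entry a_{m+i−j}. Then almost surely lim_{m→∞} |det A_m^{(n)}|^{1/m} = 1. -/
open MeasureTheory ProbabilityTheory Filter Polynomial
open scoped ENNReal


lemma aux_list_prod_le (ε : ℝ) (hε : 0 ≤ ε) : ∀ (l : List ℝ), (∀ r ∈ l, ε ≤ r) → ε ^ l.length ≤ l.prod := by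
  intro l
  induction l with
  | nil => simp
  | cons a t ih =>
    intro h
    simp only [List.length_cons, List.prod_cons, pow_succ']
    have h1 : ε ≤ a := h a List.mem_cons_self
    have h2 : ε ^ t.length ≤ t.prod := ih fun r hr => h r (List.mem_cons_of_mem _ hr)
    exact mul_le_mul h1 h2 (pow_nonneg hε _) (le_trans hε h1)

lemma poly_small_near_roots {n : ℕ} (p : Polynomial ℝ) (hmon : p.Monic)
    (hdeg : p.natDegree = n) :
    ∃ t : Fin n → ℝ, ∀ (ε x : ℝ), 0 < ε → |p.eval x| < ε ^ n → ∃ i, |x - t i| < ε := by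
  set q := p.map (algebraMap ℝ ℂ) with hq
  have hqm : q.Monic := hmon.map _
  have hsp : q.Splits := IsAlgClosed.splits q
  have hqdeg : q.natDegree = n := by rw [hq, hmon.natDegree_map, hdeg]
  have hcard : q.roots.card = n := by
    rw [← hqdeg]
    exact Polynomial.splits_iff_card_roots.1 hsp
  set L := q.roots.toList with hL
  have hlen : L.length = n := by rw [hL, Multiset.length_toList, hcard]
  refine ⟨fun i => (L.get (Fin.cast hlen.symm i)).re, ?_⟩
  intro ε x hε hsmall
  by_contra hcon
  push_neg at hcon
  -- show ε ^ n ≤ |p.eval x|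
  have hev : (q.eval (x : ℂ)) = ((p.eval x : ℝ) : ℂ) := by
    have hx : ((x : ℂ)) = algebraMap ℝ ℂ x := rfl
    rw [hq, Polynomial.eval_map, hx, Polynomial.eval₂_at_apply]
    rfl
  have habs : |p.eval x| = (normHom : ℂ →*₀ ℝ) (q.eval (x : ℂ)) := by
    show _ = ‖q.eval (x : ℂ)‖
    rw [hev, Complex.norm_real, Real.norm_eq_abs]
  have hprod : q = (q.roots.map fun r => X - C r).prod :=
    hsp.eq_prod_roots_of_monic hqm
  have hev2 : (normHom : ℂ →*₀ ℝ) (q.eval (x : ℂ)) =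
      ((L.map fun r => (normHom : ℂ →*₀ ℝ) ((x : ℂ) - r)).prod) := by
    conv_lhs => rw [hprod]
    rw [Polynomial.eval_multiset_prod]
    rw [map_multiset_prod]
    rw [Multiset.map_map, Multiset.map_map]
    rw [← Multiset.coe_toList q.roots, Multiset.map_coe, Multiset.prod_coe]
    simp only [Function.comp_def, Polynomial.eval_sub, Polynomial.eval_X, Polynomial.eval_C, hL]
  have hkey : ∀ r ∈ L.map (fun r => (normHom : ℂ →*₀ ℝ) ((x : ℂ) - r)), ε ≤ r := by
    intro v hv
    obtain ⟨r, hrL, rfl⟩ := List.mem_map.1 hv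
    obtain ⟨i, rfl⟩ := List.mem_iff_get.1 hrL
    have h1 : ε ≤ |x - (L.get i).re| := by
      have := hcon ⟨i, by rw [← hlen]; exact i.isLt⟩
      simpa using this
    refine le_trans (le_trans h1 ?_) (Complex.abs_re_le_norm _)
    have : ((x:ℂ) - L.get i).re = x - (L.get i).re := by simp
    rw [this]
  have hge : ε ^ n ≤ |p.eval x| := by
    rw [habs, hev2]
    have := aux_list_prod_le ε (le_of_lt hε) _ hkey
    simpa [hlen] using this
  exact absurd hsmall (not_lt.2 hge)


lemma det_smul_one_add {n : ℕ} (N : Matrix (Fin n) (Fin n) ℝ) (x : ℝ) :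
    Polynomial.eval x (Matrix.charpoly (-N)) = Matrix.det (x • (1 : Matrix (Fin n) (Fin n) ℝ) + N) := by
  have h := RingHom.map_det (Polynomial.evalRingHom x) (Matrix.charmatrix (-N))
  rw [Matrix.charpoly]
  have h2 : Polynomial.eval x (Matrix.charmatrix (-N)).det
      = ((Matrix.charmatrix (-N)).map (Polynomial.evalRingHom x)).det := h
  rw [h2]
  congr 1
  ext i j
  by_cases hij : i = j
  · subst hij
    simp [Matrix.charmatrix_apply_eq, Matrix.map_apply, Matrix.one_apply_eq, sub_neg_eq_add]
  · simp [Matrix.charmatrix_apply_ne _ _ _ hij, Matrix.map_apply, Matrix.one_apply_ne hij]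

lemma anti_det {Ω : Type*} [MeasurableSpace Ω] (P : Measure Ω) [IsProbabilityMeasure P]
    (a : ℕ → Ω → ℝ) (hmeas : ∀ j, Measurable (a j))
    (hindep : iIndepFun a P)
    (K : ℝ) (hanti : ∀ j, ∀ ε > (0 : ℝ), (⨆ t : ℝ, P {ω | |a j ω - t| < ε}).toReal ≤ K * ε)
    (n : ℕ) (hn : 1 ≤ n) (m : ℕ) (hm : n ≤ m) (ε : ℝ) (hε : 0 < ε) :
    P {ω | |Matrix.det (Matrix.of fun i j : Fin n =>
        if (j : ℕ) ≤ m + (i : ℕ) then a (m + (i : ℕ) - (j : ℕ)) ω else 0)| < ε ^ n}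
      ≤ n * ENNReal.ofReal (K * ε) := by
  classical
  set T : Finset ℕ := (Finset.range (m + n)).erase m with hT
  set X : Ω → ℝ := a m with hX
  set Y : Ω → (T → ℝ) := fun ω t => a t ω with hY
  set e : ℝ → (T → ℝ) → ℕ → ℝ :=
    fun x y k => if k = m then x else if hk : k ∈ T then y ⟨k, hk⟩ else 0 with he
  set g : ((T → ℝ) × ℝ) → ℝ := fun p =>
    Matrix.det (Matrix.of fun i j : Fin n => e p.2 p.1 (m + (i : ℕ) - (j : ℕ))) with hg
  have hDet : ∀ ω, (Matrix.of fun i j : Fin n =>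
        if (j : ℕ) ≤ m + (i : ℕ) then a (m + (i : ℕ) - (j : ℕ)) ω else 0)
      = (Matrix.of fun i j : Fin n => e (X ω) (Y ω) (m + (i : ℕ) - (j : ℕ))) := by
    intro ω; ext i j
    have hij : (j : ℕ) ≤ m + (i : ℕ) := by
      have := j.isLt; omega
    rw [Matrix.of_apply, Matrix.of_apply, if_pos hij]
    by_cases hkm : m + (i : ℕ) - (j : ℕ) = m
    · rw [he]; simp only; rw [if_pos hkm, hkm, hX]
    · have hkT : m + (i : ℕ) - (j : ℕ) ∈ T := by
        rw [hT, Finset.mem_erase, Finset.mem_range]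
        refine ⟨hkm, ?_⟩
        have := i.isLt; have := j.isLt; omega
      rw [he]; simp only; rw [if_neg hkm, dif_pos hkT]
  have hmeasY : Measurable Y := measurable_pi_lambda _ fun t => hmeas t
  have hindYX : IndepFun Y X P := by
    have h := hindep.indepFun_finset T {m} (by simp [hT]) hmeas
    have h2 := h.comp measurable_id
      (measurable_pi_apply (⟨m, by simp⟩ : (({m} : Finset ℕ) : Type)))
    exact h2
  have hmap : P.map (fun ω => (Y ω, X ω)) = (P.map Y).prod (P.map X) :=
    (indepFun_iff_map_prod_eq_prod_map_map hmeasY.aemeasurable (hmeas m).aemeasurable).1 hindYX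
  have hgcont : Continuous g := by
    apply Continuous.matrix_det
    apply continuous_matrix
    intro i j
    by_cases hkm : m + (i : ℕ) - (j : ℕ) = m
    · simp only [hg, he, Matrix.of_apply, if_pos hkm]
      exact continuous_snd
    · by_cases hkT : m + (i : ℕ) - (j : ℕ) ∈ T
      · simp only [hg, he, Matrix.of_apply, if_neg hkm, dif_pos hkT]
        exact (continuous_apply _).comp continuous_fst
      · simp only [hg, he, Matrix.of_apply, if_neg hkm, dif_neg hkT]
        exact continuous_const
  have hS : MeasurableSet {p : (↥T → ℝ) × ℝ | |g p| < ε ^ n} :=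
    measurableSet_lt hgcont.abs.measurable measurable_const
  haveI hPX : IsProbabilityMeasure (P.map X) := Measure.isProbabilityMeasure_map (hmeas m).aemeasurable
  haveI hPY : IsProbabilityMeasure (P.map Y) := Measure.isProbabilityMeasure_map hmeasY.aemeasurable
  have hsupfin : (⨆ t : ℝ, P {ω | |a m ω - t| < ε}) ≤ 1 := iSup_le fun t => prob_le_one
  have hsup : (⨆ t : ℝ, P {ω | |a m ω - t| < ε}) ≤ ENNReal.ofReal (K * ε) := by
    rw [← ENNReal.ofReal_toReal (lt_of_le_of_lt hsupfin ENNReal.one_lt_top).ne]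
    exact ENNReal.ofReal_le_ofReal (hanti m ε hε)
  have hinner : ∀ y : ↥T → ℝ,
      (P.map X) (Prod.mk y ⁻¹' {p | |g p| < ε ^ n}) ≤ n * ENNReal.ofReal (K * ε) := by
    intro y
    set N : Matrix (Fin n) (Fin n) ℝ :=
      Matrix.of (fun i j : Fin n => if i = j then 0 else e 0 y (m + (i : ℕ) - (j : ℕ))) with hN
    have hmatrix : ∀ x : ℝ, (Matrix.of fun i j : Fin n => e x y (m + (i : ℕ) - (j : ℕ)))
        = x • (1 : Matrix (Fin n) (Fin n) ℝ) + N := by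
      intro x; ext i j
      by_cases hij : i = j
      · subst hij
        have hmm : m + (i : ℕ) - (i : ℕ) = m := by omega
        simp [he, hN, hmm, Matrix.one_apply_eq]
      · have hvij : (i : ℕ) ≠ (j : ℕ) := fun hc => hij (Fin.ext hc)
        have hne : m + (i : ℕ) - (j : ℕ) ≠ m := by
          have := i.isLt; have := j.isLt; omega
        simp [he, hN, hij, hne, Matrix.one_apply_ne hij]
    have hgy : ∀ x : ℝ, g (y, x) = Polynomial.eval x (Matrix.charpoly (-N)) := by
      intro x
      rw [hg]; simp only
      rw [hmatrix x, det_smul_one_add]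
    obtain ⟨t, ht⟩ := poly_small_near_roots (Matrix.charpoly (-N)) (Matrix.charpoly_monic _)
      (by rw [Matrix.charpoly_natDegree_eq_dim, Fintype.card_fin])
    have hsub : (Prod.mk y ⁻¹' {p | |g p| < ε ^ n}) ⊆ ⋃ i : Fin n, {x : ℝ | |x - t i| < ε} := by
      intro x hx
      simp only [Set.mem_preimage, Set.mem_setOf_eq] at hx
      rw [hgy x] at hx
      obtain ⟨i, hi⟩ := ht ε x hε hx
      exact Set.mem_iUnion.2 ⟨i, hi⟩
    calc (P.map X) (Prod.mk y ⁻¹' {p | |g p| < ε ^ n})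
        ≤ (P.map X) (⋃ i : Fin n, {x : ℝ | |x - t i| < ε}) := measure_mono hsub
      _ ≤ ∑' i : Fin n, (P.map X) {x : ℝ | |x - t i| < ε} := measure_iUnion_le _
      _ ≤ ∑' _i : Fin n, ENNReal.ofReal (K * ε) := by
          refine ENNReal.tsum_le_tsum fun i => ?_
          have hms : MeasurableSet {x : ℝ | |x - t i| < ε} :=
            measurableSet_lt (measurable_id.sub measurable_const).abs measurable_const
          rw [Measure.map_apply (hmeas m) hms]
          refine le_trans ?_ hsup
          exact le_iSup (fun s => P {ω | |a m ω - s| < ε}) (t i)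
      _ = n * ENNReal.ofReal (K * ε) := by
          rw [tsum_fintype]
          simp [Finset.card_univ, mul_comm]
  have hset : {ω | |Matrix.det (Matrix.of fun i j : Fin n =>
        if (j : ℕ) ≤ m + (i : ℕ) then a (m + (i : ℕ) - (j : ℕ)) ω else 0)| < ε ^ n}
      = (fun ω => (Y ω, X ω)) ⁻¹' {p | |g p| < ε ^ n} := by
    ext ω
    simp only [Set.mem_setOf_eq, Set.mem_preimage, hg]
    rw [hDet ω]
  rw [hset, ← Measure.map_apply (hmeasY.prodMk (hmeas m)) hS, hmap, Measure.prod_apply hS]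
  calc (∫⁻ y, (P.map X) (Prod.mk y ⁻¹' {p | |g p| < ε ^ n}) ∂(P.map Y))
      ≤ ∫⁻ _y, n * ENNReal.ofReal (K * ε) ∂(P.map Y) := lintegral_mono hinner
    _ = n * ENNReal.ofReal (K * ε) := by rw [lintegral_const, measure_univ, mul_one]


lemma markov_abs {Ω : Type*} [MeasurableSpace Ω] (P : Measure Ω)
    (f : Ω → ℝ) (hint : Integrable f P) (γ t : ℝ)
    (hmom : ∫ ω, |f ω| ∂P ≤ γ) (ht : 0 < t) :
    P {ω | t ≤ |f ω|} ≤ ENNReal.ofReal (γ / t) := by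
  have hF : AEMeasurable (fun ω => ENNReal.ofReal |f ω|) P :=
    ENNReal.measurable_ofReal.comp_aemeasurable hint.abs.aemeasurable
  have hub := mul_meas_ge_le_lintegral₀ hF (ENNReal.ofReal t)
  have hseteq : {x | ENNReal.ofReal t ≤ ENNReal.ofReal |f x|} = {ω | t ≤ |f ω|} := by
    ext ω; simp [ENNReal.ofReal_le_ofReal_iff (abs_nonneg (f ω))]
  rw [hseteq] at hub
  have hlint : ∫⁻ ω, ENNReal.ofReal |f ω| ∂P ≤ ENNReal.ofReal γ := by
    rw [← ofReal_integral_eq_lintegral_ofReal hint.abs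
      (Eventually.of_forall fun ω => abs_nonneg _)]
    exact ENNReal.ofReal_le_ofReal hmom
  have hkey := le_trans hub hlint
  rw [ENNReal.ofReal_div_of_pos ht, ENNReal.le_div_iff_mul_le
    (Or.inl (ENNReal.ofReal_pos.2 ht).ne') (Or.inl ENNReal.ofReal_ne_top)]
  rw [mul_comm]
  exact hkey

lemma aux_tendsto (C : ℝ) (hC : 0 < C) (c : ℕ) (d : ℕ) :
    Tendsto (fun m : ℕ => (C * ((m : ℝ) + c) ^ d) ^ ((1 : ℝ) / m)) atTop (nhds 1) := by
  have hlogm : Tendsto (fun m : ℕ => Real.log m / m) atTop (nhds 0) := by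
    have h := Real.isLittleO_log_id_atTop.tendsto_div_nhds_zero
    exact h.comp tendsto_natCast_atTop_atTop
  have h2 : Tendsto (fun m : ℕ => Real.log ((m : ℝ) + c) / m) atTop (nhds 0) := by
    have hup : Tendsto (fun m : ℕ => Real.log m / m + Real.log (c + 1) / m) atTop (nhds 0) := by
      have := hlogm.add (tendsto_const_div_atTop_nhds_zero_nat (Real.log (c + 1)))
      simpa using this
    refine tendsto_of_tendsto_of_tendsto_of_le_of_le' tendsto_const_nhds hup ?_ ?_
    · filter_upwards [eventually_ge_atTop 1] with m hm
      have h1m : (1 : ℝ) ≤ (m : ℝ) := by exact_mod_cast hm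
      have : (1 : ℝ) ≤ (m : ℝ) + c := by
        have : (0:ℝ) ≤ (c:ℝ) := Nat.cast_nonneg c
        linarith
      have := Real.log_nonneg this
      positivity
    · filter_upwards [eventually_ge_atTop 1] with m hm
      have h1m : (1 : ℝ) ≤ (m : ℝ) := by exact_mod_cast hm
      have hcnn : (0:ℝ) ≤ (c:ℝ) := Nat.cast_nonneg c
      have hle : (m : ℝ) + c ≤ (m : ℝ) * ((c : ℝ) + 1) := by nlinarith
      have hlog : Real.log ((m : ℝ) + c) ≤ Real.log m + Real.log ((c : ℝ) + 1) := by
        rw [← Real.log_mul (by linarith) (by linarith)]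
        exact Real.log_le_log (by linarith) hle
      rw [← add_div]
      exact div_le_div_of_nonneg_right hlog (by linarith) |>.trans_eq rfl
  have hlog : Tendsto (fun m : ℕ => Real.log (C * ((m : ℝ) + c) ^ d) / m) atTop (nhds 0) := by
    have hsum : Tendsto (fun m : ℕ => Real.log C / m + d * (Real.log ((m : ℝ) + c) / m))
        atTop (nhds 0) := by
      have := (tendsto_const_div_atTop_nhds_zero_nat (Real.log C)).add (h2.const_mul (d : ℝ))
      simpa using this
    refine hsum.congr' ?_
    filter_upwards [eventually_ge_atTop 1] with m hm
    have h1m : (1 : ℝ) ≤ (m : ℝ) := by exact_mod_cast hm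
    have hcnn : (0:ℝ) ≤ (c:ℝ) := Nat.cast_nonneg c
    have hpos : (0:ℝ) < (m : ℝ) + c := by linarith
    rw [Real.log_mul hC.ne' (pow_ne_zero _ hpos.ne'), Real.log_pow]
    ring
  have hexp : Tendsto (fun m : ℕ => Real.exp (Real.log (C * ((m : ℝ) + c) ^ d) / m))
      atTop (nhds 1) := by
    have := (Real.continuous_exp.continuousAt (x := 0)).tendsto.comp hlog
    simpa [Function.comp_def] using this
  refine hexp.congr' ?_
  filter_upwards [eventually_ge_atTop 1] with m hm
  have h1m : (1 : ℝ) ≤ (m : ℝ) := by exact_mod_cast hm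
  have hcnn : (0:ℝ) ≤ (c:ℝ) := Nat.cast_nonneg c
  have hpos : (0:ℝ) < C * ((m : ℝ) + c) ^ d := by positivity
  rw [Real.rpow_def_of_pos hpos, mul_one_div]

lemma final_analysis {n : ℕ} (c : ℕ → ℝ) (hc0 : ∀ i, 0 < c i)
    (hcb : ∀ b : ℝ, b < 1 → ∃ i, b < c i) (G : ℕ → ℝ)
    (hlow : ∀ i, ∀ᶠ m in atTop, (c i) ^ m ≤ |G m|)
    (hup : ∀ᶠ m in atTop, |G m| ≤ (n.factorial : ℝ) * ((m : ℝ) + n) ^ (2 * n)) :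
    Tendsto (fun m : ℕ => |G m| ^ ((1 : ℝ) / m)) atTop (nhds 1) := by
  rw [tendsto_order]
  constructor
  · intro b hb
    obtain ⟨i, hbc⟩ := hcb b hb
    filter_upwards [hlow i, eventually_ge_atTop 1] with m hm hm1
    have hm0 : (m : ℝ) ≠ 0 := Nat.cast_ne_zero.2 (by omega)
    have e1 : ((c i) ^ m : ℝ) ^ ((1 : ℝ) / m) = c i := by
      rw [← Real.rpow_natCast (c i) m, ← Real.rpow_mul (hc0 i).le, mul_one_div,
        div_self hm0, Real.rpow_one]
    calc b < c i := hbc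
      _ = ((c i) ^ m) ^ ((1 : ℝ) / m) := e1.symm
      _ ≤ |G m| ^ ((1 : ℝ) / m) :=
        Real.rpow_le_rpow (pow_nonneg (hc0 i).le m) hm (by positivity)
  · intro b hb
    have htend := aux_tendsto (n.factorial : ℝ) (by positivity) n (2 * n)
    filter_upwards [(tendsto_order.1 htend).2 b hb, hup] with m hmb hmB
    calc |G m| ^ ((1 : ℝ) / m)
        ≤ ((n.factorial : ℝ) * ((m : ℝ) + n) ^ (2 * n)) ^ ((1 : ℝ) / m) :=
          Real.rpow_le_rpow (abs_nonneg _) hmB (by positivity)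
      _ < b := hmb

/-- Almost surely, for fixed `n`, the `m`-th root of the determinant of the
`n × n` random Toeplitz matrix `A_m^{(n)} = (a_{m+i-j})_{i,j}` tends to `1`
as `m → ∞`. Entries with negative index are set to `0`. -/
theorem stmt8 {Ω : Type*} [MeasurableSpace Ω] (P : Measure Ω) [IsProbabilityMeasure P]
    (a : ℕ → Ω → ℝ) (hmeas : ∀ j, Measurable (a j))
    (hindep : iIndepFun a P)
    (γ K : ℝ) (hγ : 0 < γ) (hK : 1 ≤ K) (hint : ∀ j, Integrable (a j) P)
    (hmom : ∀ j, ∫ ω, |a j ω| ∂P ≤ γ)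
    (hanti : ∀ j, ∀ ε > (0 : ℝ), (⨆ t : ℝ, P {ω | |a j ω - t| < ε}).toReal ≤ K * ε)
    (n : ℕ) (hn : 1 ≤ n) :
    ∀ᵐ ω ∂P, Tendsto
      (fun m : ℕ => |Matrix.det (Matrix.of fun i j : Fin n =>
          if (j : ℕ) ≤ m + (i : ℕ) then a (m + (i : ℕ) - (j : ℕ)) ω else 0)|
        ^ ((1 : ℝ) / m)) atTop (nhds 1) := by
  classical
  set c : ℕ → ℝ := fun i => 1 - 1 / ((i : ℝ) + 2) with hc
  have hc0 : ∀ i, 0 < c i := by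
    intro i
    have hi : (0:ℝ) ≤ (i:ℝ) := Nat.cast_nonneg i
    have h1 : 1 / ((i : ℝ) + 2) ≤ 1 / 2 :=
      one_div_le_one_div_of_le (by norm_num) (by linarith)
    simp only [hc]; linarith
  have hc1 : ∀ i, c i < 1 := by
    intro i
    have : 0 < 1 / ((i : ℝ) + 2) := by positivity
    simp only [hc]; linarith
  have hcb : ∀ b : ℝ, b < 1 → ∃ i, b < c i := by
    intro b hb
    obtain ⟨N, hN⟩ := exists_nat_gt (1 / (1 - b))
    refine ⟨N, ?_⟩
    have hb1 : 0 < 1 - b := by linarith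
    have hNn : (0:ℝ) ≤ (N:ℝ) := Nat.cast_nonneg N
    have h3 : 1 / (1 - b) < (N : ℝ) + 2 := by linarith
    have h4 : 1 / ((N : ℝ) + 2) < 1 - b := by
      rw [div_lt_iff₀ hb1] at h3
      rw [div_lt_iff₀ (by positivity)]
      nlinarith
    simp only [hc]; linarith
  -- upper bound Borel–Cantelli
  have hBC1 : ∀ᵐ ω ∂P, ∀ᶠ j : ℕ in atTop, ω ∉ {ω | ((j : ℝ) + 1) ^ 2 ≤ |a j ω|} := by
    apply ae_eventually_notMem
    have hb : ∀ j : ℕ, P {ω | ((j : ℝ) + 1) ^ 2 ≤ |a j ω|}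
        ≤ ENNReal.ofReal (γ / ((j : ℝ) + 1) ^ 2) := fun j =>
      markov_abs P (a j) (hint j) γ _ (hmom j) (by positivity)
    have hsum : Summable (fun j : ℕ => γ / ((j : ℝ) + 1) ^ 2) := by
      have h0 : Summable (fun j : ℕ => 1 / ((j : ℝ)) ^ 2) :=
        Real.summable_one_div_nat_pow.2 one_lt_two
      have h1 : Summable (fun j : ℕ => 1 / (((j : ℝ)) + 1) ^ 2) := by
        have := (summable_nat_add_iff 1).2 h0
        refine this.congr fun j => ?_
        push_cast
        ring
      refine (h1.mul_left γ).congr fun j => ?_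
      rw [mul_one_div]
    refine ne_of_lt (lt_of_le_of_lt (ENNReal.tsum_le_tsum hb) ?_)
    rw [← ENNReal.ofReal_tsum_of_nonneg (fun j => by positivity) hsum]
    exact ENNReal.ofReal_lt_top
  -- lower bound Borel–Cantelli
  have hBC2 : ∀ i : ℕ, ∀ᵐ ω ∂P, ∀ᶠ m in atTop,
      (c i) ^ m ≤ |Matrix.det (Matrix.of fun i' j : Fin n =>
        if (j : ℕ) ≤ m + (i' : ℕ) then a (m + (i' : ℕ) - (j : ℕ)) ω else 0)| := by
    intro i
    set r : ℝ := (c i) ^ ((1 : ℝ) / n) with hr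
    have hr0 : 0 < r := Real.rpow_pos_of_pos (hc0 i) _
    have hr1 : r < 1 := Real.rpow_lt_one (hc0 i).le (hc1 i) (by positivity)
    have hpow : ∀ M : ℕ, ((c i) ^ M) ^ ((1 : ℝ) / n) = r ^ M := by
      intro M
      rw [hr, ← Real.rpow_natCast (c i) M, ← Real.rpow_mul (hc0 i).le, mul_comm,
        Real.rpow_mul (hc0 i).le, Real.rpow_natCast]
    have hle : ∀ k : ℕ, P {ω | |Matrix.det (Matrix.of fun i' j : Fin n =>
          if (j : ℕ) ≤ (n + k) + (i' : ℕ) then a ((n + k) + (i' : ℕ) - (j : ℕ)) ω else 0)|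
            < (c i) ^ (n + k)}
        ≤ (n : ℝ≥0∞) * ENNReal.ofReal (K * r ^ (n + k)) := by
      intro k
      have hεpos : 0 < ((c i) ^ (n + k)) ^ ((1 : ℝ) / n) :=
        Real.rpow_pos_of_pos (pow_pos (hc0 i) _) _
      have hεn : ((((c i) ^ (n + k)) ^ ((1 : ℝ) / n)) : ℝ) ^ n = (c i) ^ (n + k) := by
        rw [← Real.rpow_natCast ((((c i) ^ (n + k)) ^ ((1 : ℝ) / n))) n,
          ← Real.rpow_mul (pow_pos (hc0 i) _).le,
          one_div_mul_cancel (Nat.cast_ne_zero.2 (by omega)), Real.rpow_one]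
      have h := anti_det P a hmeas hindep K hanti n hn (n + k) (Nat.le_add_right _ _)
        _ hεpos
      rw [hεn, hpow] at h
      exact h
    have hsum2 : (∑' k : ℕ, P {ω | |Matrix.det (Matrix.of fun i' j : Fin n =>
          if (j : ℕ) ≤ (n + k) + (i' : ℕ) then a ((n + k) + (i' : ℕ) - (j : ℕ)) ω else 0)|
            < (c i) ^ (n + k)}) ≠ ⊤ := by
      refine ne_of_lt (lt_of_le_of_lt (ENNReal.tsum_le_tsum hle) ?_)
      rw [ENNReal.tsum_mul_left]
      have hsumr : Summable (fun k : ℕ => K * r ^ (n + k)) := by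
        have := (summable_geometric_of_lt_one hr0.le hr1).mul_left (K * r ^ n)
        refine this.congr fun k => ?_
        rw [pow_add]; ring
      rw [← ENNReal.ofReal_tsum_of_nonneg
        (fun k => mul_nonneg (le_trans zero_le_one hK) (pow_nonneg hr0.le _)) hsumr]
      exact ENNReal.mul_lt_top (ENNReal.natCast_lt_top n) ENNReal.ofReal_lt_top
    have hae := ae_eventually_notMem hsum2
    filter_upwards [hae] with ω hω
    rw [eventually_atTop] at hω ⊢
    obtain ⟨N, hN⟩ := hω
    refine ⟨n + N, fun m hm => ?_⟩
    have h1 := hN (m - n) (by omega)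
    have h2 : n + (m - n) = m := by omega
    rw [h2] at h1
    simp only [Set.mem_setOf_eq, not_lt] at h1
    exact h1
  have hBC2' : ∀ᵐ ω ∂P, ∀ i : ℕ, ∀ᶠ m in atTop,
      (c i) ^ m ≤ |Matrix.det (Matrix.of fun i' j : Fin n =>
        if (j : ℕ) ≤ m + (i' : ℕ) then a (m + (i' : ℕ) - (j : ℕ)) ω else 0)| :=
    ae_all_iff.2 hBC2
  filter_upwards [hBC1, hBC2'] with ω h1 h2
  refine final_analysis (n := n) c hc0 hcb _ h2 ?_
  rw [eventually_atTop] at h1 ⊢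
  obtain ⟨J, hJ⟩ := h1
  refine ⟨J + n, fun m hm => ?_⟩
  have hx : ∀ i j : Fin n, (AbsoluteValue.abs : AbsoluteValue ℝ ℝ)
      ((Matrix.of fun i' j' : Fin n =>
        if (j' : ℕ) ≤ m + (i' : ℕ) then a (m + (i' : ℕ) - (j' : ℕ)) ω else 0) i j)
      ≤ ((m : ℝ) + n) ^ 2 := by
    intro i j
    rw [Matrix.of_apply]
    by_cases hij : (j : ℕ) ≤ m + (i : ℕ)
    · rw [if_pos hij]
      set k := m + (i : ℕ) - (j : ℕ) with hk
      have hkJ : J ≤ k := by have := i.isLt; have := j.isLt; omega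
      have hk1 : k + 1 ≤ m + n := by have := i.isLt; have := j.isLt; omega
      have hbound := hJ k hkJ
      simp only [Set.mem_setOf_eq, not_le] at hbound
      have hcast : (k : ℝ) + 1 ≤ (m : ℝ) + n := by exact_mod_cast hk1
      calc (AbsoluteValue.abs : AbsoluteValue ℝ ℝ) (a k ω) = |a k ω| := rfl
        _ ≤ ((k : ℝ) + 1) ^ 2 := hbound.le
        _ ≤ ((m : ℝ) + n) ^ 2 := by
            apply pow_le_pow_left₀ (by positivity) hcast
    · rw [if_neg hij]
      simp only [map_zero]
      positivity
  have hdet := Matrix.det_le hx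
  simp only [Fintype.card_fin, nsmul_eq_mul] at hdet
  calc |Matrix.det (Matrix.of fun i' j' : Fin n =>
        if (j' : ℕ) ≤ m + (i' : ℕ) then a (m + (i' : ℕ) - (j' : ℕ)) ω else 0)|
      ≤ (n.factorial : ℝ) * (((m : ℝ) + n) ^ 2) ^ n := hdet
    _ = (n.factorial : ℝ) * ((m : ℝ) + n) ^ (2 * n) := by rw [← pow_mul]
end

section
/- Let a = (a_0, ..., a_N) be an isotropic random vector in ℝ^{N+1} (mean zero, identity covariance) satisfying ℙ(|⟨a, u⟩| < ε) ≤ K ε for all unit vectors u and all ε > 0, for some K ≥ 1. For z ∈ ℂ, let X_z = |Σ_{j=0}^N a_j z^j|². Then for every z and every t > 0, ℙ(|log X_z − log E[X_z]| > t) ≤ 3K e^{−t/2}, where E[X_z] = Σ_{k=0}^N |z|^{2k}. -/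
open MeasureTheory Finset
open scoped ENNReal

/-!
Write `X = ‖∑ᵢ aᵢ cᵢ‖² = ⟨a, Re c⟩² + ⟨a, Im c⟩²`. Isotropy gives `E X = ∑ᵢ ‖cᵢ‖² =: M`, so
Markov bounds the upper tail `X ≥ M eᵗ` by `e⁻ᵗ`. One of `Re c`, `Im c` carries at least half
of `M`; the event `X < M e⁻ᵗ` forces the projection of `a` on that direction to be smaller than
`√M e^{-t/2}`, which anti-concentration bounds by `√2 K e^{-t/2}`.
-/

open Real

lemma memLp_two_of_integral_mul_self_eq_one {Ω : Type*} [MeasurableSpace Ω] {P : Measure Ω}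
    {f : Ω → ℝ} (hf : AEStronglyMeasurable f P) (h : ∫ ω, f ω * f ω ∂P = 1) : MemLp f 2 P :=
  (memLp_two_iff_integrable_sq hf).2 <| Integrable.of_integral_ne_zero <| by simp [sq, h]

section Isotropic

variable {Ω ι : Type*} [MeasurableSpace Ω] {P : Measure Ω} [DecidableEq ι] {a : Ω → ι → ℝ}

lemma memLp_two_apply_of_integral_mul_eq_ite (hmeas : Measurable a)
    (hcov : ∀ i j, ∫ ω, a ω i * a ω j ∂P = if i = j then 1 else 0) (i : ι) :
    MemLp (fun ω => a ω i) 2 P :=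
  memLp_two_of_integral_mul_self_eq_one hmeas.eval.aestronglyMeasurable (by simpa using hcov i i)

variable [Fintype ι]

lemma integrable_sq_sum_mul (hmeas : Measurable a)
    (hcov : ∀ i j, ∫ ω, a ω i * a ω j ∂P = if i = j then 1 else 0) (w : ι → ℝ) :
    Integrable (fun ω => (∑ i, a ω i * w i) ^ 2) P :=
  (memLp_finsetSum _ fun i _ =>
    (memLp_two_apply_of_integral_mul_eq_ite hmeas hcov i).mul_const (w i)).integrable_sq

lemma integral_sq_sum_mul (hmeas : Measurable a)
    (hcov : ∀ i j, ∫ ω, a ω i * a ω j ∂P = if i = j then 1 else 0) (w : ι → ℝ) :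
    ∫ ω, (∑ i, a ω i * w i) ^ 2 ∂P = ∑ i, w i ^ 2 := by
  have hint (i j : ι) : Integrable (fun ω => w i * w j * (a ω i * a ω j)) P :=
    ((memLp_two_apply_of_integral_mul_eq_ite hmeas hcov i).integrable_mul (p := 2) (q := 2)
      (memLp_two_apply_of_integral_mul_eq_ite hmeas hcov j)).const_mul _
  calc ∫ ω, (∑ i, a ω i * w i) ^ 2 ∂P
      = ∫ ω, ∑ i, ∑ j, w i * w j * (a ω i * a ω j) ∂P := by
        congr 1 with ω
        rw [sq, sum_mul_sum]
        exact sum_congr rfl fun i _ => sum_congr rfl fun j _ => by ring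
    _ = ∑ i, ∑ j, w i * w j * (if i = j then 1 else 0) := by
        rw [integral_finsetSum _ fun i _ => integrable_finsetSum _ fun j _ => hint i j]
        simp only [integral_finsetSum _ fun j _ => hint _ j, integral_const_mul, hcov]
    _ = ∑ i, w i ^ 2 := by simp [sq]

end Isotropic

lemma sq_norm_sum_ofReal_mul {ι : Type*} [Fintype ι] (x : ι → ℝ) (c : ι → ℂ) :
    ‖∑ i, (x i : ℂ) * c i‖ ^ 2 = (∑ i, x i * (c i).re) ^ 2 + (∑ i, x i * (c i).im) ^ 2 := by
  rw [Complex.sq_norm, Complex.normSq_apply, Complex.re_sum, Complex.im_sum]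
  simp only [Complex.re_ofReal_mul, Complex.im_ofReal_mul]
  ring

lemma sum_sq_re_add_sum_sq_im {ι : Type*} [Fintype ι] (c : ι → ℂ) :
    ∑ i, (c i).re ^ 2 + ∑ i, (c i).im ^ 2 = ∑ i, ‖c i‖ ^ 2 := by
  simp only [← sum_add_distrib, Complex.sq_norm, Complex.normSq_apply, ← sq]

lemma le_mul_exp_or_lt_mul_exp_neg_of_lt_abs_log_sub_log {x M t : ℝ} (hM : 0 < M)
    (h : t < |log x - log M|) : M * exp t ≤ x ∨ x < M * exp (-t) := by
  by_contra! hx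
  have hx0 : 0 < x := (by positivity : 0 < M * exp (-t)).trans_le hx.2
  have hupper : log x < log M + t := by
    simpa [log_mul hM.ne', log_exp] using log_lt_log hx0 hx.1
  have hlower : log M - t ≤ log x := by
    simpa [log_mul hM.ne', log_exp, ← sub_eq_add_neg] using log_le_log (by positivity) hx.2
  exact h.not_ge (abs_le.2 ⟨by linarith, by linarith⟩)

section Tails

variable {Ω ι : Type*} [MeasurableSpace Ω] {P : Measure Ω} [Fintype ι] {a : Ω → ι → ℝ} {K : ℝ}

lemma measureReal_mul_exp_le_le_exp_neg {f : Ω → ℝ} (hf0 : 0 ≤ f) (hf : Integrable f P)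
    {M : ℝ} (hM : 0 < M) (hfM : ∫ ω, f ω ∂P = M) (t : ℝ) :
    P.real {ω | M * exp t ≤ f ω} ≤ exp (-t) := by
  have hmarkov := mul_meas_ge_le_integral_of_nonneg (Filter.Eventually.of_forall hf0) hf
    (M * exp t)
  rw [hfM, ← le_div_iff₀' (by positivity)] at hmarkov
  rwa [div_mul_cancel_left₀ hM.ne', ← exp_neg] at hmarkov

lemma measureReal_abs_sum_mul_lt_le
    (hanti : ∀ u : ι → ℝ, (∑ i, u i ^ 2) = 1 → ∀ ε > (0 : ℝ),
      (P {ω | |∑ i, a ω i * u i| < ε}).toReal ≤ K * ε)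
    {w : ι → ℝ} (hw : 0 < ∑ i, w i ^ 2) {δ : ℝ} (hδ : 0 < δ) :
    P.real {ω | |∑ i, a ω i * w i| < δ} ≤ K * δ / √(∑ i, w i ^ 2) := by
  set s := √(∑ i, w i ^ 2)
  have hs : 0 < s := sqrt_pos.2 hw
  have hunit : ∑ i, (w i / s) ^ 2 = 1 := by
    simp_rw [div_pow]
    rw [← sum_div, sq_sqrt hw.le, div_self hw.ne']
  have hset : {ω | |∑ i, a ω i * w i| < δ} = {ω | |∑ i, a ω i * (w i / s)| < δ / s} := by
    ext ω
    simp only [Set.mem_ofPred_eq, mul_div_assoc', ← sum_div, abs_div, abs_of_pos hs,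
      div_lt_div_iff_of_pos_right hs]
  rw [hset, mul_div_assoc]
  exact hanti _ hunit _ (div_pos hδ hs)

variable [IsFiniteMeasure P]

lemma measureReal_lt_mul_exp_neg_le
    (hanti : ∀ u : ι → ℝ, (∑ i, u i ^ 2) = 1 → ∀ ε > (0 : ℝ),
      (P {ω | |∑ i, a ω i * u i| < ε}).toReal ≤ K * ε)
    (hK : 0 ≤ K) {f : Ω → ℝ} {w : ι → ℝ} {M : ℝ} (hM : 0 < M) (hw : M ≤ 2 * ∑ i, w i ^ 2)
    (hf : ∀ ω, (∑ i, a ω i * w i) ^ 2 ≤ f ω) (t : ℝ) :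
    P.real {ω | f ω < M * exp (-t)} ≤ √2 * K * exp (-t / 2) := by
  have hw0 : 0 < ∑ i, w i ^ 2 := by linarith
  have hMexp : M * exp (-t) = (√M * exp (-t / 2)) ^ 2 := by
    rw [mul_pow, sq_sqrt hM.le, ← exp_nat_mul]
    ring_nf
  have hsqrt : √M ≤ √2 * √(∑ i, w i ^ 2) := by
    rw [← sqrt_mul zero_le_two]
    exact sqrt_le_sqrt hw
  calc P.real {ω | f ω < M * exp (-t)}
      ≤ P.real {ω | |∑ i, a ω i * w i| < √M * exp (-t / 2)} :=
        measureReal_mono fun ω hω =>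
          abs_lt_of_sq_lt_sq ((hf ω).trans_lt (hMexp ▸ hω)) (by positivity)
    _ ≤ K * (√M * exp (-t / 2)) / √(∑ i, w i ^ 2) :=
        measureReal_abs_sum_mul_lt_le hanti hw0 (by positivity)
    _ ≤ √2 * K * exp (-t / 2) := by
        rw [div_le_iff₀ (sqrt_pos.2 hw0)]
        calc K * (√M * exp (-t / 2)) = K * exp (-t / 2) * √M := by ring
          _ ≤ K * exp (-t / 2) * (√2 * √(∑ i, w i ^ 2)) := by gcongr
          _ = √2 * K * exp (-t / 2) * √(∑ i, w i ^ 2) := by ring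

theorem measureReal_lt_abs_log_sq_norm_sub_log_le [DecidableEq ι] (hmeas : Measurable a)
    (hcov : ∀ i j, ∫ ω, a ω i * a ω j ∂P = if i = j then 1 else 0)
    (hanti : ∀ u : ι → ℝ, (∑ i, u i ^ 2) = 1 → ∀ ε > (0 : ℝ),
      (P {ω | |∑ i, a ω i * u i| < ε}).toReal ≤ K * ε)
    (hK : 0 ≤ K) (c : ι → ℂ) (hc : 0 < ∑ i, ‖c i‖ ^ 2) (t : ℝ) :
    P.real {ω | t < |log (‖∑ i, (a ω i : ℂ) * c i‖ ^ 2) - log (∑ i, ‖c i‖ ^ 2)|}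
      ≤ exp (-t) + √2 * K * exp (-t / 2) := by
  set M := ∑ i, ‖c i‖ ^ 2
  set X : Ω → ℝ := fun ω => ‖∑ i, (a ω i : ℂ) * c i‖ ^ 2
  have hX : X = fun ω => (∑ i, a ω i * (c i).re) ^ 2 + (∑ i, a ω i * (c i).im) ^ 2 :=
    funext fun ω => sq_norm_sum_ofReal_mul _ _
  have hXint : Integrable X P :=
    hX ▸ (integrable_sq_sum_mul hmeas hcov _).add (integrable_sq_sum_mul hmeas hcov _)
  have hEX : ∫ ω, X ω ∂P = M := by
    rw [hX, integral_add (integrable_sq_sum_mul hmeas hcov _)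
      (integrable_sq_sum_mul hmeas hcov _), integral_sq_sum_mul hmeas hcov,
      integral_sq_sum_mul hmeas hcov, sum_sq_re_add_sum_sq_im]
  have hlower : P.real {ω | X ω < M * exp (-t)} ≤ √2 * K * exp (-t / 2) := by
    have hM := sum_sq_re_add_sum_sq_im c
    rcases le_total (∑ i, (c i).im ^ 2) (∑ i, (c i).re ^ 2) with hre | him
    · refine measureReal_lt_mul_exp_neg_le hanti hK (w := fun i => (c i).re) hc (by linarith)
        (fun ω => ?_) t
      rw [hX]
      exact le_add_of_nonneg_right (sq_nonneg _)
    · refine measureReal_lt_mul_exp_neg_le hanti hK (w := fun i => (c i).im) hc (by linarith)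
        (fun ω => ?_) t
      rw [hX]
      exact le_add_of_nonneg_left (sq_nonneg _)
  calc P.real {ω | t < |log (X ω) - log M|}
      ≤ P.real ({ω | M * exp t ≤ X ω} ∪ {ω | X ω < M * exp (-t)}) :=
        measureReal_mono fun ω hω => le_mul_exp_or_lt_mul_exp_neg_of_lt_abs_log_sub_log hc hω
    _ ≤ P.real {ω | M * exp t ≤ X ω} + P.real {ω | X ω < M * exp (-t)} :=
        measureReal_union_le _ _
    _ ≤ exp (-t) + √2 * K * exp (-t / 2) :=
        add_le_add (measureReal_mul_exp_le_le_exp_neg (fun ω => sq_nonneg _) hXint hc hEX t)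
          hlower

end Tails

theorem stmt9_general {Ω : Type*} [MeasurableSpace Ω] (P : Measure Ω) [IsProbabilityMeasure P]
    (N : ℕ) (a : Ω → Fin (N + 1) → ℝ) (hmeas : Measurable a)
    (hcov : ∀ i j, ∫ ω, a ω i * a ω j ∂P = if i = j then 1 else 0)
    (K : ℝ) (hK : 1 ≤ K)
    (hanti : ∀ u : Fin (N + 1) → ℝ, (∑ i, u i ^ 2) = 1 → ∀ ε > (0 : ℝ),
      (P {ω | |∑ i, a ω i * u i| < ε}).toReal ≤ K * ε)
    (z : ℂ) (t : ℝ) (ht : 0 < t) :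
    (P {ω | |Real.log ((‖∑ j : Fin (N + 1), (a ω j : ℂ) * z ^ (j : ℕ)‖) ^ 2)
          - Real.log (∑ k : Fin (N + 1), ‖z‖ ^ (2 * (k : ℕ)))| > t}).toReal
      ≤ 3 * K * Real.exp (-t / 2) := by
  have hnorm : ∑ k : Fin (N + 1), ‖z‖ ^ (2 * (k : ℕ)) = ∑ k : Fin (N + 1), ‖z ^ (k : ℕ)‖ ^ 2 := by
    simp_rw [norm_pow, ← pow_mul, mul_comm]
  have hpos : 0 < ∑ k : Fin (N + 1), ‖z ^ (k : ℕ)‖ ^ 2 :=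
    one_pos.trans_le <| by
      simpa using single_le_sum (fun (k : Fin (N + 1)) _ => sq_nonneg ‖z ^ (k : ℕ)‖) (mem_univ 0)
  have hexp : exp (-t) ≤ K * exp (-t / 2) :=
    (exp_le_exp.2 (by linarith)).trans (le_mul_of_one_le_left (exp_pos _).le hK)
  have hsqrt2 : √2 ≤ 2 := by
    rw [sqrt_le_left zero_le_two]
    norm_num
  calc (P {ω | |log (‖∑ j : Fin (N + 1), (a ω j : ℂ) * z ^ (j : ℕ)‖ ^ 2)
          - log (∑ k : Fin (N + 1), ‖z‖ ^ (2 * (k : ℕ)))| > t}).toReal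
      ≤ exp (-t) + √2 * K * exp (-t / 2) := by
        rw [hnorm]
        exact measureReal_lt_abs_log_sq_norm_sub_log_le hmeas hcov hanti (by linarith) _ hpos t
    _ ≤ 3 * K * exp (-t / 2) := by
        nlinarith [mul_le_mul_of_nonneg_right hsqrt2 (by positivity : 0 ≤ K * exp (-t / 2))]

/-- Two-sided tail bound for `log X_z` where `X_z = |∑_j a_j z^j|²` and `a` is an
isotropic random vector with linear anti-concentration: for all `z` and `t > 0`,
`ℙ(|log X_z − log E[X_z]| > t) ≤ 3 K e^{−t/2}`, where `E[X_z] = ∑_k |z|^{2k}`. -/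
theorem stmt9 {Ω : Type*} [MeasurableSpace Ω] (P : Measure Ω) [IsProbabilityMeasure P]
    (N : ℕ) (a : Ω → Fin (N + 1) → ℝ) (hmeas : Measurable a)
    (hmean : ∀ i, ∫ ω, a ω i ∂P = 0)
    (hcov : ∀ i j, ∫ ω, a ω i * a ω j ∂P = if i = j then 1 else 0)
    (K : ℝ) (hK : 1 ≤ K)
    (hanti : ∀ u : Fin (N + 1) → ℝ, (∑ i, u i ^ 2) = 1 → ∀ ε > (0 : ℝ),
      (P {ω | |∑ i, a ω i * u i| < ε}).toReal ≤ K * ε)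
    (z : ℂ) (t : ℝ) (ht : 0 < t) :
    (P {ω | |Real.log ((‖∑ j : Fin (N + 1), (a ω j : ℂ) * z ^ (j : ℕ)‖) ^ 2)
          - Real.log (∑ k : Fin (N + 1), ‖z‖ ^ (2 * (k : ℕ)))| > t}).toReal
      ≤ 3 * K * Real.exp (-t / 2) :=
  stmt9_general P N a hmeas hcov K hK hanti z t ht
end
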